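/- arXiv:1909.08969 — 4 statements merged into one kernel-verified Lean document; each statement's English description precedes it below -/
import Mathlib

section
/- Let W₁, W₂ : ℝ → ℝ be nondecreasing cumulative arrival (work) functions and let r₁, r₂ ≥ 0 with r₁ + r₂ = 1. Define U(t) = sup_{0 ≤ s ≤ t} ((W₁(t)+W₂(t)) − (W₁(s)+W₂(s)) − (t − s)), U₁(t) = sup_{0 ≤ s ≤ t} (W₁(t) − W₁(s) − r₁·(t − s)), and U₂(t) = sup_{0 ≤ s ≤ t} (W₂(t) − W₂(s) − r₂·(t − s)). Then for all t ≥ 0, U(t) ≤ U₁(t) + U₂(t). (Lemma 1 for the two-queue case.) -/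
/-! Since `r₁ + r₂ = 1`, the net input `W(t) - W(s) - (t - s)` of the merged queue over `[s, t]`
is the sum of the net inputs of the two queues, and the supremum of a sum is at most the sum of
the suprema. -/

open Set

theorem csSup_image_add_le {α β : Type*} [ConditionallyCompleteLattice β] [Add β]
    [AddLeftMono β] [AddRightMono β] {f g : α → β} {s : Set α} (hs : s.Nonempty)
    (hf : BddAbove (f '' s)) (hg : BddAbove (g '' s)) :
    sSup ((f + g) '' s) ≤ sSup (f '' s) + sSup (g '' s) :=
  csSup_le (hs.image _) <| forall_mem_image.2 fun _ hx =>
    add_le_add (le_csSup hf (mem_image_of_mem f hx)) (le_csSup hg (mem_image_of_mem g hx))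

theorem Monotone.bddAbove_image_sub_sub_mul_Icc {W : ℝ → ℝ} (hW : Monotone W) {r : ℝ}
    (hr : 0 ≤ r) (t : ℝ) :
    BddAbove ((fun s => W t - W s - r * (t - s)) '' Icc 0 t) := by
  refine ⟨W t - W 0, forall_mem_image.2 fun s ⟨hs0, hst⟩ => ?_⟩
  have hW0 : W 0 ≤ W s := hW hs0
  have hdrain : 0 ≤ r * (t - s) := mul_nonneg hr (sub_nonneg.2 hst)
  linarith

/-- Lemma 1 for the two-queue case (continuous time, Reich's formula). -/
theorem one_queue_le_two_queues_unfinished_work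
    (W₁ W₂ : ℝ → ℝ) (hW₁ : Monotone W₁) (hW₂ : Monotone W₂)
    (r₁ r₂ : ℝ) (hr₁ : 0 ≤ r₁) (hr₂ : 0 ≤ r₂) (hrsum : r₁ + r₂ = 1) :
    ∀ t : ℝ, 0 ≤ t →
      sSup ((fun s => (W₁ t + W₂ t) - (W₁ s + W₂ s) - (t - s)) '' Set.Icc (0 : ℝ) t)
        ≤ sSup ((fun s => W₁ t - W₁ s - r₁ * (t - s)) '' Set.Icc (0 : ℝ) t)
          + sSup ((fun s => W₂ t - W₂ s - r₂ * (t - s)) '' Set.Icc (0 : ℝ) t) := by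
  intro t ht
  have hsplit : (fun s => (W₁ t + W₂ t) - (W₁ s + W₂ s) - (t - s)) =
      (fun s => W₁ t - W₁ s - r₁ * (t - s)) + (fun s => W₂ t - W₂ s - r₂ * (t - s)) := by
    funext s
    simp only [Pi.add_apply]
    linear_combination (t - s) * hrsum
  rw [hsplit]
  exact csSup_image_add_le (nonempty_Icc.2 ht)
    (hW₁.bddAbove_image_sub_sub_mul_Icc hr₁ t) (hW₂.bddAbove_image_sub_sub_mul_Icc hr₂ t)
end

section
/- Let k ≥ 1, let w_l : ℕ → ℝ with w_l(n) ≥ 0 for l = 1,…,k be the work arriving to queue l in time slot n, and let r_l ≥ 0 with Σ_{l=1}^k r_l = 1. Define the single-queue unfinished-work sequence by the Lindley recursion U(0) = 0, U(n+1) = max(0, U(n) + Σ_{l=1}^k w_l(n) − 1), and for each l the sequence U_l(0) = 0, U_l(n+1) = max(0, U_l(n) + w_l(n) − r_l). Then for all n, U(n) ≤ Σ_{l=1}^k U_l(n). (Discrete-time version of Lemma 1.) -/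
/-! The map `x ↦ max 0 x` is monotone and subadditive. The pooled queue receives the sum of
the arrivals at the sum of the rates, so if its backlog is at most the sum of the individual
backlogs, one Lindley step preserves this. -/

open Finset

section Lindley

variable {ι α : Type*} [AddCommGroup α] [LinearOrder α] [IsOrderedAddMonoid α]

theorem max_zero_add_le (a b : α) : max 0 (a + b) ≤ max 0 a + max 0 b :=
  max_le (add_nonneg (le_max_left _ _) (le_max_left _ _))
    (add_le_add (le_max_right _ _) (le_max_right _ _))

theorem max_zero_sum_le_sum_max_zero (s : Finset ι) (f : ι → α) :
    max 0 (∑ i ∈ s, f i) ≤ ∑ i ∈ s, max 0 (f i) :=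
  le_sum_of_subadditive (max 0) (max_self 0).le max_zero_add_le s f

theorem max_zero_add_sum_sub_sum_le {u : α} (s : Finset ι) (v a c : ι → α)
    (hu : u ≤ ∑ i ∈ s, v i) :
    max 0 (u + ∑ i ∈ s, a i - ∑ i ∈ s, c i) ≤ ∑ i ∈ s, max 0 (v i + a i - c i) :=
  calc max 0 (u + ∑ i ∈ s, a i - ∑ i ∈ s, c i)
      ≤ max 0 (∑ i ∈ s, (v i + a i - c i)) := by
        rw [sum_sub_distrib, sum_add_distrib]
        gcongr
    _ ≤ ∑ i ∈ s, max 0 (v i + a i - c i) := max_zero_sum_le_sum_max_zero s _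

end Lindley

theorem one_queue_le_k_queues_lindley_general
    (k : ℕ)
    (w : Fin k → ℕ → ℝ)
    (r : Fin k → ℝ) (hrsum : ∑ l, r l = 1)
    (U : ℕ → ℝ) (hU0 : U 0 = 0)
    (hU : ∀ n, U (n + 1) = max 0 (U n + (∑ l, w l n) - 1))
    (Ul : Fin k → ℕ → ℝ) (hUl0 : ∀ l, Ul l 0 = 0)
    (hUl : ∀ l n, Ul l (n + 1) = max 0 (Ul l n + w l n - r l)) :
    ∀ n, U n ≤ ∑ l, Ul l n := by
  intro n
  induction n with
  | zero => simp [hU0, hUl0]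
  | succ n ih =>
    rw [hU n, ← hrsum]
    simpa only [hUl] using max_zero_add_sum_sub_sum_le univ (Ul · n) (w · n) r ih

/-- Discrete-time version of Lemma 1 via Lindley recursions. -/
theorem one_queue_le_k_queues_lindley
    (k : ℕ) (hk : 1 ≤ k)
    (w : Fin k → ℕ → ℝ) (hw : ∀ l n, 0 ≤ w l n)
    (r : Fin k → ℝ) (hr : ∀ l, 0 ≤ r l) (hrsum : ∑ l, r l = 1)
    (U : ℕ → ℝ) (hU0 : U 0 = 0)
    (hU : ∀ n, U (n + 1) = max 0 (U n + (∑ l, w l n) - 1))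
    (Ul : Fin k → ℕ → ℝ) (hUl0 : ∀ l, Ul l 0 = 0)
    (hUl : ∀ l n, Ul l (n + 1) = max 0 (Ul l n + w l n - r l)) :
    ∀ n, U n ≤ ∑ l, Ul l n :=
  one_queue_le_k_queues_lindley_general k w r hrsum U hU0 hU Ul hUl0 hUl
end

section
/- Let W₁, W₂ : ℝ → ℝ be nondecreasing cumulative arrival functions, r₁, r₂ ≥ 0 with r₁ + r₂ = 1, and b₁, b₂ real bucket sizes with b = b₁ + b₂. Define U(t) = sup_{0 ≤ s ≤ t} ((W₁(t)+W₂(t)) − (W₁(s)+W₂(s)) − (t − s)) and U_l(t) = sup_{0 ≤ s ≤ t} (W_l(t) − W_l(s) − r_l·(t − s)) for l = 1, 2, and let N(t) = ⌈max(0, U(t) − b)⌉ and N_l(t) = ⌈max(0, U_l(t) − b_l)⌉. Then for all t ≥ 0, N(t) ≤ N₁(t) + N₂(t): at every instant, the number of jobs waiting for tokens in the one-bucket system (r, b) = (r₁+r₂, b₁+b₂) is at most the total number of jobs waiting for tokens in the two sub-bucket systems (r₁, b₁) and (r₂, b₂). -/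
/-!
Splitting the service rate as `r₁ + r₂ = 1` splits every term of Reich's supremum into the
corresponding terms for the two sub-queues, so the unfinished work is subadditive:
`U ≤ U₁ + U₂`. Subtracting `b = b₁ + b₂`, the delayed work `max 0 (U - b)` is then at most the
sum of the two delayed works, and taking ceilings preserves this since `⌈x + y⌉ ≤ ⌈x⌉ + ⌈y⌉`.
-/

open Set

noncomputable section

/-- Reich's formula for the unfinished work at time `t` of a queue with service rate `r`
and cumulative arrivals `W`. -/
def unfinishedWork (W : ℝ → ℝ) (r t : ℝ) : ℝ :=
  sSup ((fun s => W t - W s - r * (t - s)) '' Icc 0 t)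

/-- The number of jobs waiting for tokens in a bucket of size `b` with unfinished work `U`. -/
def waitingJobs (U b : ℝ) : ℤ :=
  ⌈max 0 (U - b)⌉

end

section UnfinishedWork

variable {W : ℝ → ℝ} {r s t : ℝ}

/-- Without this bound `sSup` would return the junk value `0` instead of the supremum. -/
theorem bddAbove_unfinishedWork_image (hW : Monotone W) (r t : ℝ) :
    BddAbove ((fun s => W t - W s - r * (t - s)) '' Icc 0 t) := by
  refine ⟨W t - W 0 + |r| * t, ?_⟩
  rintro _ ⟨s, ⟨hs₀, hst⟩, rfl⟩
  have hWs : W 0 ≤ W s := hW hs₀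
  have hrate : -r * (t - s) ≤ |r| * t := by
    nlinarith [neg_le_abs r, abs_nonneg r]
  linarith

theorem le_unfinishedWork (hW : Monotone W) (hs : s ∈ Icc 0 t) :
    W t - W s - r * (t - s) ≤ unfinishedWork W r t :=
  le_csSup (bddAbove_unfinishedWork_image hW r t) ⟨s, hs, rfl⟩

theorem unfinishedWork_add_le {W₁ W₂ : ℝ → ℝ} (hW₁ : Monotone W₁) (hW₂ : Monotone W₂)
    (r₁ r₂ : ℝ) (ht : 0 ≤ t) :
    unfinishedWork (W₁ + W₂) (r₁ + r₂) t ≤ unfinishedWork W₁ r₁ t + unfinishedWork W₂ r₂ t := by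
  refine csSup_le ((nonempty_Icc.2 ht).image _) ?_
  rintro _ ⟨s, hs, rfl⟩
  have h₁ := le_unfinishedWork (r := r₁) hW₁ hs
  have h₂ := le_unfinishedWork (r := r₂) hW₂ hs
  simp only [Pi.add_apply]
  linarith

end UnfinishedWork

theorem waitingJobs_add_le {U U₁ U₂ : ℝ} (hU : U ≤ U₁ + U₂) (b₁ b₂ : ℝ) :
    waitingJobs U (b₁ + b₂) ≤ waitingJobs U₁ b₁ + waitingJobs U₂ b₂ := by
  have hdelay : max 0 (U - (b₁ + b₂)) ≤ max 0 (U₁ - b₁) + max 0 (U₂ - b₂) :=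
    max_le (add_nonneg (le_max_left _ _) (le_max_left _ _))
      (by linarith [le_max_right 0 (U₁ - b₁), le_max_right 0 (U₂ - b₂)])
  calc waitingJobs U (b₁ + b₂)
      ≤ ⌈max 0 (U₁ - b₁) + max 0 (U₂ - b₂)⌉ := Int.ceil_le_ceil hdelay
    _ ≤ waitingJobs U₁ b₁ + waitingJobs U₂ b₂ := Int.ceil_add_le _ _

theorem waiting_jobs_one_bucket_le_two_buckets_general
    (W₁ W₂ : ℝ → ℝ) (hW₁ : Monotone W₁) (hW₂ : Monotone W₂)
    (r₁ r₂ : ℝ) (hrsum : r₁ + r₂ = 1)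
    (b₁ b₂ b : ℝ) (hb : b = b₁ + b₂)
    (U U₁ U₂ : ℝ → ℝ)
    (hU : ∀ t, U t =
      sSup ((fun s => (W₁ t + W₂ t) - (W₁ s + W₂ s) - (t - s)) '' Set.Icc (0 : ℝ) t))
    (hU₁ : ∀ t, U₁ t =
      sSup ((fun s => W₁ t - W₁ s - r₁ * (t - s)) '' Set.Icc (0 : ℝ) t))
    (hU₂ : ∀ t, U₂ t =
      sSup ((fun s => W₂ t - W₂ s - r₂ * (t - s)) '' Set.Icc (0 : ℝ) t)) :
    ∀ t : ℝ, 0 ≤ t →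
      (⌈max 0 (U t - b)⌉ : ℤ) ≤ ⌈max 0 (U₁ t - b₁)⌉ + ⌈max 0 (U₂ t - b₂)⌉ := by
  intro t ht
  have hUt : U t = unfinishedWork (W₁ + W₂) (r₁ + r₂) t := by
    simp only [hU, hrsum, unfinishedWork, Pi.add_apply, one_mul]
  have hsub : U t ≤ U₁ t + U₂ t := by
    rw [hUt, hU₁, hU₂]
    exact unfinishedWork_add_le hW₁ hW₂ r₁ r₂ ht
  subst hb
  exact waitingJobs_add_le hsub b₁ b₂

/-- At every instant, the number of jobs waiting for tokens in the one-bucket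
system `(r₁+r₂, b₁+b₂)` is at most the total number waiting in the two
sub-bucket systems `(r₁, b₁)` and `(r₂, b₂)`. -/
theorem waiting_jobs_one_bucket_le_two_buckets
    (W₁ W₂ : ℝ → ℝ) (hW₁ : Monotone W₁) (hW₂ : Monotone W₂)
    (r₁ r₂ : ℝ) (hr₁ : 0 ≤ r₁) (hr₂ : 0 ≤ r₂) (hrsum : r₁ + r₂ = 1)
    (b₁ b₂ b : ℝ) (hb : b = b₁ + b₂)
    (U U₁ U₂ : ℝ → ℝ)
    (hU : ∀ t, U t =
      sSup ((fun s => (W₁ t + W₂ t) - (W₁ s + W₂ s) - (t - s)) '' Set.Icc (0 : ℝ) t))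
    (hU₁ : ∀ t, U₁ t =
      sSup ((fun s => W₁ t - W₁ s - r₁ * (t - s)) '' Set.Icc (0 : ℝ) t))
    (hU₂ : ∀ t, U₂ t =
      sSup ((fun s => W₂ t - W₂ s - r₂ * (t - s)) '' Set.Icc (0 : ℝ) t)) :
    ∀ t : ℝ, 0 ≤ t →
      (⌈max 0 (U t - b)⌉ : ℤ) ≤ ⌈max 0 (U₁ t - b₁)⌉ + ⌈max 0 (U₂ t - b₂)⌉ :=
  waiting_jobs_one_bucket_le_two_buckets_general W₁ W₂ hW₁ hW₂ r₁ r₂ hrsum b₁ b₂ b hb U U₁ U₂ hU hU₁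
    hU₂
end

section
/- Let k ≥ 1, let W_l : ℝ → ℝ for l = 1,…,k be nondecreasing cumulative arrival functions, let r_l ≥ 0 with Σ_{l=1}^k r_l = 1, and let b_l be real bucket sizes with b = Σ_{l=1}^k b_l. Define W = Σ_{l=1}^k W_l, U(t) = sup_{0 ≤ s ≤ t} (W(t) − W(s) − (t − s)), U_l(t) = sup_{0 ≤ s ≤ t} (W_l(t) − W_l(s) − r_l·(t − s)), N(t) = ⌈max(0, U(t) − b)⌉, and N_l(t) = ⌈max(0, U_l(t) − b_l)⌉. Then for all t ≥ 0, N(t) ≤ Σ_{l=1}^k N_l(t): at every instant, the number of jobs waiting for tokens in the one-bucket system is at most the total number waiting across the k sub-bucket systems. -/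
/-!
Taking the same `s` in every supremum, the aggregate increment `W(t) - W(s) - (t - s)` splits,
because `∑ r_l = 1`, into the sum of the per-bucket increments `W_l(t) - W_l(s) - r_l (t - s)`;
hence `U(t) ≤ ∑ U_l(t)`. Subtracting `b = ∑ b_l`, the positive part and the ceiling are both
subadditive, which gives `N(t) ≤ ∑ N_l(t)`.
-/

open Finset

lemma Monotone.bddAbove_image_increment {f : ℝ → ℝ} (hf : Monotone f) (c a t : ℝ) :
    BddAbove ((fun s => f t - f s - c * (t - s)) '' Set.Icc a t) := by
  refine ⟨f t - f a + |c| * (t - a), ?_⟩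
  rintro _ ⟨s, ⟨has, hst⟩, rfl⟩
  have hcs : -(c * (t - s)) ≤ |c| * (t - a) := by
    calc -(c * (t - s)) ≤ |c| * (t - s) := by
          simpa only [abs_mul, abs_of_nonneg (sub_nonneg.mpr hst)] using neg_le_abs (c * (t - s))
      _ ≤ |c| * (t - a) := by gcongr
  linarith [hf has]

lemma csSup_image_sum_le {ι α : Type*} (I : Finset ι) (g : ι → α → ℝ) {S : Set α}
    (hS : S.Nonempty) (hg : ∀ i ∈ I, BddAbove (g i '' S)) :
    sSup ((fun s => ∑ i ∈ I, g i s) '' S) ≤ ∑ i ∈ I, sSup (g i '' S) :=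
  csSup_le (hS.image _) <| by
    rintro _ ⟨s, hs, rfl⟩
    exact sum_le_sum fun i hi => le_csSup (hg i hi) (Set.mem_image_of_mem _ hs)

lemma max_zero_sub_sum_le {ι : Type*} (I : Finset ι) {x : ℝ} (y b : ι → ℝ)
    (hxy : x ≤ ∑ i ∈ I, y i) :
    max 0 (x - ∑ i ∈ I, b i) ≤ ∑ i ∈ I, max 0 (y i - b i) :=
  max_le (sum_nonneg fun _ _ => le_max_left _ _) <|
    calc x - ∑ i ∈ I, b i ≤ ∑ i ∈ I, (y i - b i) := by rw [sum_sub_distrib]; linarith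
      _ ≤ ∑ i ∈ I, max 0 (y i - b i) := sum_le_sum fun _ _ => le_max_right _ _

lemma Int.ceil_sum_le {ι : Type*} (I : Finset ι) (x : ι → ℝ) :
    ⌈∑ i ∈ I, x i⌉ ≤ ∑ i ∈ I, ⌈x i⌉ :=
  Int.ceil_le.mpr <| by push_cast; exact sum_le_sum fun i _ => Int.le_ceil (x i)

theorem waiting_jobs_one_bucket_le_k_buckets_general
    (k : ℕ)
    (W : Fin k → ℝ → ℝ) (hW : ∀ l, Monotone (W l))
    (r : Fin k → ℝ) (hrsum : ∑ l, r l = 1)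
    (b : Fin k → ℝ) (btot : ℝ) (hb : btot = ∑ l, b l)
    (U : ℝ → ℝ)
    (hU : ∀ t, U t =
      sSup ((fun s => (∑ l, W l t) - (∑ l, W l s) - (t - s)) '' Set.Icc (0 : ℝ) t))
    (Ul : Fin k → ℝ → ℝ)
    (hUl : ∀ l t, Ul l t =
      sSup ((fun s => W l t - W l s - r l * (t - s)) '' Set.Icc (0 : ℝ) t)) :
    ∀ t : ℝ, 0 ≤ t →
      (⌈max 0 (U t - btot)⌉ : ℤ) ≤ ∑ l, ⌈max 0 (Ul l t - b l)⌉ := by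
  intro t ht
  have hsplit : (fun s => (∑ l, W l t) - (∑ l, W l s) - (t - s))
      = fun s => ∑ l, (W l t - W l s - r l * (t - s)) := by
    ext s
    rw [sum_sub_distrib, sum_sub_distrib, ← sum_mul, hrsum, one_mul]
  have hU_le : U t ≤ ∑ l, Ul l t := by
    simp only [hU, hUl, hsplit]
    exact csSup_image_sum_le _ _ ⟨t, ht, le_rfl⟩
      fun l _ => (hW l).bddAbove_image_increment (r l) 0 t
  calc (⌈max 0 (U t - btot)⌉ : ℤ) ≤ ⌈∑ l, max 0 (Ul l t - b l)⌉ :=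
        Int.ceil_le_ceil (hb ▸ max_zero_sub_sum_le _ _ _ hU_le)
    _ ≤ ∑ l, ⌈max 0 (Ul l t - b l)⌉ := Int.ceil_sum_le _ _

/-- At every instant, the number of jobs waiting for tokens in the one-bucket
system is at most the total number waiting across the `k` sub-bucket systems. -/
theorem waiting_jobs_one_bucket_le_k_buckets
    (k : ℕ) (hk : 1 ≤ k)
    (W : Fin k → ℝ → ℝ) (hW : ∀ l, Monotone (W l))
    (r : Fin k → ℝ) (hr : ∀ l, 0 ≤ r l) (hrsum : ∑ l, r l = 1)
    (b : Fin k → ℝ) (btot : ℝ) (hb : btot = ∑ l, b l)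
    (U : ℝ → ℝ)
    (hU : ∀ t, U t =
      sSup ((fun s => (∑ l, W l t) - (∑ l, W l s) - (t - s)) '' Set.Icc (0 : ℝ) t))
    (Ul : Fin k → ℝ → ℝ)
    (hUl : ∀ l t, Ul l t =
      sSup ((fun s => W l t - W l s - r l * (t - s)) '' Set.Icc (0 : ℝ) t)) :
    ∀ t : ℝ, 0 ≤ t →
      (⌈max 0 (U t - btot)⌉ : ℤ) ≤ ∑ l, ⌈max 0 (Ul l t - b l)⌉ :=
  waiting_jobs_one_bucket_le_k_buckets_general k W hW r hrsum b btot hb U hU Ul hUl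
end
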